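/- arXiv:2503.09660 — 6 statements merged into one kernel-verified Lean document; each statement's English description precedes it below -/
import Mathlib

section
/- Let n ≥ 1, let f ∈ ℂ^n be a vector with ‖f‖₂ = 1, and let H and H' be n × n Hermitian matrices. Then the 1-Wasserstein distance between the power spectrum measures satisfies W₁(μ_f^H, μ_f^{H'}) ≤ n · ‖H − H'‖₂, where ‖·‖₂ is the operator norm induced by the Euclidean norm. -/
open MeasureTheory

/-- The power spectrum measure `μ_f^H = Σ_i |⟨φ_i, f⟩|² δ_{λ_i}` of a vector `f` with respect
to a Hermitian matrix `H`, where `φ_i` is an orthonormal eigenbasis with eigenvalues `λ_i`. -/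
noncomputable def powerSpectrum {𝕜 : Type} [RCLike 𝕜] {n : ℕ} (H : Matrix (Fin n) (Fin n) 𝕜)
    (hH : H.IsHermitian) (f : EuclideanSpace 𝕜 (Fin n)) : Measure ℝ :=
  ∑ i : Fin n, ENNReal.ofReal (‖(inner 𝕜 (hH.eigenvectorBasis i) f : 𝕜)‖ ^ 2) •
    Measure.dirac (hH.eigenvalues i)

/-- The operator norm of a matrix induced by the Euclidean norm. -/
noncomputable def matOpNorm {𝕜 : Type} [RCLike 𝕜] {n : ℕ} (M : Matrix (Fin n) (Fin n) 𝕜) : ℝ :=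
  ‖Matrix.toEuclideanCLM (𝕜 := 𝕜) M‖

/-- The 1-Wasserstein distance `∫ |F_μ(x) - F_ν(x)| dx` between two measures on ℝ,
expressed via their cumulative distribution functions. -/
noncomputable def W1 (μ ν : Measure ℝ) : ℝ :=
  ∫ x, |(μ (Set.Iic x)).toReal - (ν (Set.Iic x)).toReal|

namespace WassersteinAux

/-- pointwise formula for the difference of step indicators -/
lemma indicator_step_eq (a b : ℝ) :
    (fun x : ℝ => (if a ≤ x then (1:ℝ) else 0) - (if b ≤ x then 1 else 0))
      = fun x => (Set.Ico a b).indicator (fun _ => (1:ℝ)) x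
          - (Set.Ico b a).indicator (fun _ => (1:ℝ)) x := by
  funext x
  simp only [Set.indicator_apply, Set.mem_Ico]
  by_cases h1 : a ≤ x <;> by_cases h2 : b ≤ x <;>
    simp [h1, h2, lt_of_not_ge, not_lt_of_ge]

lemma integrable_step (a b : ℝ) :
    Integrable (fun x : ℝ => (if a ≤ x then (1:ℝ) else 0) - (if b ≤ x then 1 else 0)) := by
  rw [indicator_step_eq]
  refine Integrable.sub ?_ ?_ <;>
  · rw [integrable_indicator_iff measurableSet_Ico]
    refine integrableOn_const (ne_of_lt ?_)
    rw [Real.volume_Ico]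
    exact ENNReal.ofReal_lt_top

lemma indicator_abs_eq (a b : ℝ) :
    (fun x : ℝ => |(if a ≤ x then (1:ℝ) else 0) - (if b ≤ x then 1 else 0)|)
      = (Set.Ico (min a b) (max a b)).indicator (fun _ => (1:ℝ)) := by
  funext x
  simp only [Set.indicator_apply, Set.mem_Ico, min_le_iff, lt_max_iff]
  by_cases h1 : a ≤ x <;> by_cases h2 : b ≤ x <;>
    simp [h1, h2, lt_of_not_ge, not_lt_of_ge, lt_irrefl]

lemma integral_abs_step (a b : ℝ) :
    ∫ x : ℝ, |(if a ≤ x then (1:ℝ) else 0) - (if b ≤ x then 1 else 0)| = |a - b| := by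
  rw [indicator_abs_eq]
  rw [MeasureTheory.integral_indicator_const (1:ℝ) measurableSet_Ico]
  simp only [Real.volume_Ico, smul_eq_mul, mul_one,
    ENNReal.toReal_ofReal (sub_nonneg.2 (min_le_max (a := a) (b := b)))]
  rcases le_total a b with h | h
  · simp [h, min_eq_left h, max_eq_right h, abs_of_nonpos (sub_nonpos.2 h)]
  · simp [h, min_eq_right h, max_eq_left h, abs_of_nonneg (sub_nonneg.2 h)]

lemma powerSpectrum_Iic {𝕜 : Type} [RCLike 𝕜] {n : ℕ} (H : Matrix (Fin n) (Fin n) 𝕜)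
    (hH : H.IsHermitian) (f : EuclideanSpace 𝕜 (Fin n)) (x : ℝ) :
    ((powerSpectrum H hH f) (Set.Iic x)).toReal
      = ∑ i : Fin n, (if hH.eigenvalues i ≤ x then (1:ℝ) else 0) *
          ‖(inner 𝕜 (hH.eigenvectorBasis i) f : 𝕜)‖ ^ 2 := by
  rw [powerSpectrum, Measure.finset_sum_apply]
  rw [ENNReal.toReal_sum]
  · refine Finset.sum_congr rfl fun i _ => ?_
    rw [Measure.smul_apply, Measure.dirac_apply, smul_eq_mul]
    by_cases h : hH.eigenvalues i ≤ x
    · simp [Set.indicator_apply, Set.mem_Iic, h, ENNReal.toReal_ofReal (sq_nonneg _)]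
    · simp [Set.indicator_apply, Set.mem_Iic, h]
  · intro i _
    rw [Measure.smul_apply, Measure.dirac_apply, smul_eq_mul]
    by_cases h : hH.eigenvalues i ≤ x <;>
      simp [Set.indicator_apply, Set.mem_Iic, h]

lemma parseval {n : ℕ} (b : OrthonormalBasis (Fin n) ℂ (EuclideanSpace ℂ (Fin n)))
    (f : EuclideanSpace ℂ (Fin n)) :
    ∑ i, ‖(inner ℂ (b i) f : ℂ)‖ ^ 2 = ‖f‖ ^ 2 := by
  have h1 : ‖b.repr f‖ = ‖f‖ := b.repr.norm_map f
  have h2 : ‖b.repr f‖ ^ 2 = ∑ i, ‖b.repr f i‖ ^ 2 := by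
    rw [EuclideanSpace.norm_eq, Real.sq_sqrt]
    positivity
  rw [← h1, h2]
  exact Finset.sum_congr rfl fun i _ => by rw [b.repr_apply_apply]

lemma inner_expand {n : ℕ} (b : OrthonormalBasis (Fin n) ℂ (EuclideanSpace ℂ (Fin n)))
    (v f : EuclideanSpace ℂ (Fin n)) :
    (inner ℂ v f : ℂ) = ∑ j, (inner ℂ v (b j) : ℂ) * (inner ℂ (b j) f : ℂ) := by
  conv_lhs => rw [← b.sum_repr f]
  rw [inner_sum]
  refine Finset.sum_congr rfl fun j _ => ?_
  rw [b.repr_apply_apply, inner_smul_right]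
  exact mul_comm _ _

lemma conj_mul_re (z : ℂ) : (starRingEnd ℂ z * z).re = ‖z‖ ^ 2 := by
  rw [mul_comm, Complex.mul_conj, Complex.ofReal_re, Complex.normSq_eq_norm_sq]

/-- The key interference coefficients. -/
noncomputable def rfun {n : ℕ} (φ ψ : OrthonormalBasis (Fin n) ℂ (EuclideanSpace ℂ (Fin n)))
    (f : EuclideanSpace ℂ (Fin n)) (i j : Fin n) : ℝ :=
  (starRingEnd ℂ (inner ℂ (φ i) f : ℂ) * (inner ℂ (φ i) (ψ j) : ℂ) * (inner ℂ (ψ j) f : ℂ)).re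

lemma sum_rfun_right {n : ℕ} (φ ψ : OrthonormalBasis (Fin n) ℂ (EuclideanSpace ℂ (Fin n)))
    (f : EuclideanSpace ℂ (Fin n)) (i : Fin n) :
    ∑ j, rfun φ ψ f i j = ‖(inner ℂ (φ i) f : ℂ)‖ ^ 2 := by
  unfold rfun
  rw [← Complex.re_sum]
  have : ∑ j, starRingEnd ℂ (inner ℂ (φ i) f : ℂ) * (inner ℂ (φ i) (ψ j) : ℂ) * (inner ℂ (ψ j) f : ℂ)
      = starRingEnd ℂ (inner ℂ (φ i) f : ℂ) * (inner ℂ (φ i) f : ℂ) := by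
    rw [inner_expand ψ (φ i) f, Finset.mul_sum]
    exact Finset.sum_congr rfl fun j _ => by ring
  rw [this, conj_mul_re]

lemma sum_rfun_left {n : ℕ} (φ ψ : OrthonormalBasis (Fin n) ℂ (EuclideanSpace ℂ (Fin n)))
    (f : EuclideanSpace ℂ (Fin n)) (j : Fin n) :
    ∑ i, rfun φ ψ f i j = ‖(inner ℂ (ψ j) f : ℂ)‖ ^ 2 := by
  unfold rfun
  rw [← Complex.re_sum]
  have hconj : starRingEnd ℂ (inner ℂ (ψ j) f : ℂ)
      = ∑ i, starRingEnd ℂ (inner ℂ (φ i) f : ℂ) * (inner ℂ (φ i) (ψ j) : ℂ) := by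
    rw [inner_expand φ (ψ j) f, map_sum]
    refine Finset.sum_congr rfl fun i _ => ?_
    rw [map_mul, inner_conj_symm, inner_conj_symm]
    exact mul_comm _ _
  have : ∑ i, starRingEnd ℂ (inner ℂ (φ i) f : ℂ) * (inner ℂ (φ i) (ψ j) : ℂ) * (inner ℂ (ψ j) f : ℂ)
      = starRingEnd ℂ (inner ℂ (ψ j) f : ℂ) * (inner ℂ (ψ j) f : ℂ) := by
    rw [hconj, Finset.sum_mul]
  rw [this, conj_mul_re]

lemma abs_rfun_le {n : ℕ} (φ ψ : OrthonormalBasis (Fin n) ℂ (EuclideanSpace ℂ (Fin n)))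
    (f : EuclideanSpace ℂ (Fin n)) (i j : Fin n) :
    |rfun φ ψ f i j|
      ≤ (‖(inner ℂ (φ i) f : ℂ)‖ * ‖(inner ℂ (ψ j) f : ℂ)‖) * ‖(inner ℂ (φ i) (ψ j) : ℂ)‖ := by
  unfold rfun
  calc |(starRingEnd ℂ (inner ℂ (φ i) f : ℂ) * (inner ℂ (φ i) (ψ j) : ℂ) * (inner ℂ (ψ j) f : ℂ)).re|
      ≤ ‖starRingEnd ℂ (inner ℂ (φ i) f : ℂ) * (inner ℂ (φ i) (ψ j) : ℂ) * (inner ℂ (ψ j) f : ℂ)‖ := by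
        exact Complex.abs_re_le_norm _
    _ = (‖(inner ℂ (φ i) f : ℂ)‖ * ‖(inner ℂ (ψ j) f : ℂ)‖) * ‖(inner ℂ (φ i) (ψ j) : ℂ)‖ := by
        rw [norm_mul, norm_mul, RCLike.norm_conj]; ring

lemma cdf_diff {n : ℕ} (H H' : Matrix (Fin n) (Fin n) ℂ)
    (hH : H.IsHermitian) (hH' : H'.IsHermitian) (f : EuclideanSpace ℂ (Fin n)) (x : ℝ) :
    ((powerSpectrum H hH f) (Set.Iic x)).toReal - ((powerSpectrum H' hH' f) (Set.Iic x)).toReal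
      = ∑ p : Fin n × Fin n,
          ((if hH.eigenvalues p.1 ≤ x then (1:ℝ) else 0)
            - (if hH'.eigenvalues p.2 ≤ x then 1 else 0)) *
            rfun hH.eigenvectorBasis hH'.eigenvectorBasis f p.1 p.2 := by
  rw [powerSpectrum_Iic, powerSpectrum_Iic, Fintype.sum_prod_type]
  have hsplit : ∀ i : Fin n,
      ∑ j, ((if hH.eigenvalues i ≤ x then (1:ℝ) else 0)
          - (if hH'.eigenvalues j ≤ x then 1 else 0)) *
          rfun hH.eigenvectorBasis hH'.eigenvectorBasis f i j
      = (if hH.eigenvalues i ≤ x then (1:ℝ) else 0) * ‖(inner ℂ (hH.eigenvectorBasis i) f : ℂ)‖ ^ 2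
        - ∑ j, (if hH'.eigenvalues j ≤ x then (1:ℝ) else 0) *
            rfun hH.eigenvectorBasis hH'.eigenvectorBasis f i j := by
    intro i
    rw [← sum_rfun_right hH.eigenvectorBasis hH'.eigenvectorBasis f i, Finset.mul_sum,
      ← Finset.sum_sub_distrib]
    exact Finset.sum_congr rfl fun j _ => by ring
  have h1 : ∑ i : Fin n, ∑ j : Fin n,
      ((if hH.eigenvalues i ≤ x then (1:ℝ) else 0)
        - (if hH'.eigenvalues j ≤ x then 1 else 0)) *
        rfun hH.eigenvectorBasis hH'.eigenvectorBasis f i j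
      = ∑ i : Fin n,
        ((if hH.eigenvalues i ≤ x then (1:ℝ) else 0) * ‖(inner ℂ (hH.eigenvectorBasis i) f : ℂ)‖ ^ 2
          - ∑ j, (if hH'.eigenvalues j ≤ x then (1:ℝ) else 0) *
              rfun hH.eigenvectorBasis hH'.eigenvectorBasis f i j) :=
    Finset.sum_congr rfl fun i _ => hsplit i
  rw [h1, Finset.sum_sub_distrib]
  congr 1
  rw [Finset.sum_comm]
  refine Finset.sum_congr rfl fun j _ => ?_
  rw [← Finset.mul_sum, sum_rfun_left hH.eigenvectorBasis hH'.eigenvectorBasis f j]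

lemma eigenCLM {n : ℕ} (H : Matrix (Fin n) (Fin n) ℂ) (hH : H.IsHermitian) (i : Fin n) :
    Matrix.toEuclideanCLM (𝕜 := ℂ) H (hH.eigenvectorBasis i)
      = (hH.eigenvalues i : ℂ) • hH.eigenvectorBasis i := by
  have h := hH.mulVec_eigenvectorBasis i
  apply WithLp.ofLp_injective
  rw [Matrix.ofLp_toEuclideanCLM]
  ext j
  have := congrFun h j
  simpa using this

lemma inner_delta {n : ℕ} (H H' : Matrix (Fin n) (Fin n) ℂ)
    (hH : H.IsHermitian) (hH' : H'.IsHermitian) (i j : Fin n) :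
    (inner ℂ (hH.eigenvectorBasis i)
        (Matrix.toEuclideanCLM (𝕜 := ℂ) (H - H') (hH'.eigenvectorBasis j)) : ℂ)
      = ((hH.eigenvalues i : ℂ) - (hH'.eigenvalues j : ℂ)) *
          (inner ℂ (hH.eigenvectorBasis i) (hH'.eigenvectorBasis j) : ℂ) := by
  rw [map_sub]
  rw [ContinuousLinearMap.sub_apply, inner_sub_right]
  have h1 : (inner ℂ (hH.eigenvectorBasis i)
      (Matrix.toEuclideanCLM (𝕜 := ℂ) H (hH'.eigenvectorBasis j)) : ℂ)
      = (hH.eigenvalues i : ℂ) *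
          (inner ℂ (hH.eigenvectorBasis i) (hH'.eigenvectorBasis j) : ℂ) := by
    have hsym := (Matrix.isHermitian_iff_isSymmetric.1 hH)
    have := (hsym (hH.eigenvectorBasis i) (hH'.eigenvectorBasis j)).symm
    rw [← Matrix.coe_toEuclideanCLM_eq_toEuclideanLin] at this
    simp only [ContinuousLinearMap.coe_coe] at this
    rw [this, eigenCLM H hH i, inner_smul_left]
    simp [Complex.conj_ofReal]
  have h2 : (inner ℂ (hH.eigenvectorBasis i)
      (Matrix.toEuclideanCLM (𝕜 := ℂ) H' (hH'.eigenvectorBasis j)) : ℂ)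
      = (hH'.eigenvalues j : ℂ) *
          (inner ℂ (hH.eigenvectorBasis i) (hH'.eigenvectorBasis j) : ℂ) := by
    rw [eigenCLM H' hH' j, inner_smul_right]
  rw [h1, h2]; ring

lemma row_bound {n : ℕ} (H H' : Matrix (Fin n) (Fin n) ℂ)
    (hH : H.IsHermitian) (hH' : H'.IsHermitian) (j : Fin n) :
    ∑ i, (|hH.eigenvalues i - hH'.eigenvalues j| *
        ‖(inner ℂ (hH.eigenvectorBasis i) (hH'.eigenvectorBasis j) : ℂ)‖) ^ 2
      ≤ matOpNorm (H - H') ^ 2 := by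
  have heq : ∀ i, |hH.eigenvalues i - hH'.eigenvalues j| *
      ‖(inner ℂ (hH.eigenvectorBasis i) (hH'.eigenvectorBasis j) : ℂ)‖
      = ‖(inner ℂ (hH.eigenvectorBasis i)
          (Matrix.toEuclideanCLM (𝕜 := ℂ) (H - H') (hH'.eigenvectorBasis j)) : ℂ)‖ := by
    intro i
    rw [inner_delta H H' hH hH' i j, norm_mul]
    congr 1
    rw [show ((hH.eigenvalues i : ℂ) - (hH'.eigenvalues j : ℂ))
        = ((hH.eigenvalues i - hH'.eigenvalues j : ℝ) : ℂ) by push_cast; ring]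
    rw [Complex.norm_real, Real.norm_eq_abs]
  calc ∑ i, (|hH.eigenvalues i - hH'.eigenvalues j| *
        ‖(inner ℂ (hH.eigenvectorBasis i) (hH'.eigenvectorBasis j) : ℂ)‖) ^ 2
      = ∑ i, ‖(inner ℂ (hH.eigenvectorBasis i)
          (Matrix.toEuclideanCLM (𝕜 := ℂ) (H - H') (hH'.eigenvectorBasis j)) : ℂ)‖ ^ 2 :=
        Finset.sum_congr rfl fun i _ => by rw [heq i]
    _ = ‖Matrix.toEuclideanCLM (𝕜 := ℂ) (H - H') (hH'.eigenvectorBasis j)‖ ^ 2 :=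
        parseval hH.eigenvectorBasis _
    _ ≤ matOpNorm (H - H') ^ 2 := by
        have hle : ‖Matrix.toEuclideanCLM (𝕜 := ℂ) (H - H') (hH'.eigenvectorBasis j)‖
            ≤ matOpNorm (H - H') := by
          have h1 := (Matrix.toEuclideanCLM (𝕜 := ℂ) (H - H')).le_opNorm (hH'.eigenvectorBasis j)
          have h2 : ‖hH'.eigenvectorBasis j‖ = 1 := hH'.eigenvectorBasis.orthonormal.1 j
          rw [h2, mul_one] at h1
          exact h1
        exact pow_le_pow_left₀ (norm_nonneg _) hle 2

end WassersteinAux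

open WassersteinAux in
/-- for a unit vector `f ∈ ℂ^n` and Hermitian `H, H'`,
`W₁(μ_f^H, μ_f^{H'}) ≤ n ‖H - H'‖₂`. -/
theorem wasserstein_powerSpectrum_le {n : ℕ} (hn : 1 ≤ n)
    (f : EuclideanSpace ℂ (Fin n)) (hf : ‖f‖ = 1)
    (H H' : Matrix (Fin n) (Fin n) ℂ) (hH : H.IsHermitian) (hH' : H'.IsHermitian) :
    W1 (powerSpectrum H hH f) (powerSpectrum H' hH' f) ≤ n * matOpNorm (H - H') := by
  classical
  -- step 1 : W1 ≤ ∑ |λᵢ - μⱼ| |rᵢⱼ|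
  have step1 : W1 (powerSpectrum H hH f) (powerSpectrum H' hH' f)
      ≤ ∑ p : Fin n × Fin n, |hH.eigenvalues p.1 - hH'.eigenvalues p.2| *
          |rfun hH.eigenvectorBasis hH'.eigenvectorBasis f p.1 p.2| := by
    rw [W1]
    have heq : (fun x : ℝ => |((powerSpectrum H hH f) (Set.Iic x)).toReal
        - ((powerSpectrum H' hH' f) (Set.Iic x)).toReal|)
        = fun x => |∑ p : Fin n × Fin n,
            ((if hH.eigenvalues p.1 ≤ x then (1:ℝ) else 0)
              - (if hH'.eigenvalues p.2 ≤ x then 1 else 0)) *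
              rfun hH.eigenvectorBasis hH'.eigenvectorBasis f p.1 p.2| := by
      funext x; rw [cdf_diff H H' hH hH' f x]
    rw [heq]
    have hint : ∀ p : Fin n × Fin n, Integrable (fun x : ℝ =>
        ((if hH.eigenvalues p.1 ≤ x then (1:ℝ) else 0)
          - (if hH'.eigenvalues p.2 ≤ x then 1 else 0)) *
          rfun hH.eigenvectorBasis hH'.eigenvectorBasis f p.1 p.2) :=
      fun p => (integrable_step (hH.eigenvalues p.1) (hH'.eigenvalues p.2)).mul_const _
    have hintabs : ∀ p : Fin n × Fin n, Integrable (fun x : ℝ =>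
        |(if hH.eigenvalues p.1 ≤ x then (1:ℝ) else 0)
          - (if hH'.eigenvalues p.2 ≤ x then 1 else 0)| *
          |rfun hH.eigenvectorBasis hH'.eigenvectorBasis f p.1 p.2|) :=
      fun p => ((integrable_step (hH.eigenvalues p.1) (hH'.eigenvalues p.2)).abs).mul_const _
    calc (∫ x, |∑ p : Fin n × Fin n,
            ((if hH.eigenvalues p.1 ≤ x then (1:ℝ) else 0)
              - (if hH'.eigenvalues p.2 ≤ x then 1 else 0)) *
              rfun hH.eigenvectorBasis hH'.eigenvectorBasis f p.1 p.2|)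
        ≤ ∫ x, ∑ p : Fin n × Fin n,
            |(if hH.eigenvalues p.1 ≤ x then (1:ℝ) else 0)
              - (if hH'.eigenvalues p.2 ≤ x then 1 else 0)| *
              |rfun hH.eigenvectorBasis hH'.eigenvectorBasis f p.1 p.2| := by
          refine integral_mono ((integrable_finset_sum _ fun p _ => hint p).abs)
            (integrable_finset_sum _ fun p _ => hintabs p) ?_
          intro x
          refine (Finset.abs_sum_le_sum_abs _ _).trans (le_of_eq ?_)
          exact Finset.sum_congr rfl fun p _ => abs_mul _ _
      _ = ∑ p : Fin n × Fin n, ∫ x,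
            |(if hH.eigenvalues p.1 ≤ x then (1:ℝ) else 0)
              - (if hH'.eigenvalues p.2 ≤ x then 1 else 0)| *
              |rfun hH.eigenvectorBasis hH'.eigenvectorBasis f p.1 p.2| :=
          integral_finset_sum _ fun p _ => hintabs p
      _ = ∑ p : Fin n × Fin n, |hH.eigenvalues p.1 - hH'.eigenvalues p.2| *
            |rfun hH.eigenvectorBasis hH'.eigenvectorBasis f p.1 p.2| := by
          refine Finset.sum_congr rfl fun p _ => ?_
          rw [integral_mul_const, integral_abs_step]
  -- step 2 : bound |r| and apply Cauchy–Schwarz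
  have step2 : ∑ p : Fin n × Fin n, |hH.eigenvalues p.1 - hH'.eigenvalues p.2| *
        |rfun hH.eigenvectorBasis hH'.eigenvectorBasis f p.1 p.2|
      ≤ ∑ p : Fin n × Fin n,
          (‖(inner ℂ (hH.eigenvectorBasis p.1) f : ℂ)‖ * ‖(inner ℂ (hH'.eigenvectorBasis p.2) f : ℂ)‖)
          * (|hH.eigenvalues p.1 - hH'.eigenvalues p.2| *
              ‖(inner ℂ (hH.eigenvectorBasis p.1) (hH'.eigenvectorBasis p.2) : ℂ)‖) := by
    refine Finset.sum_le_sum fun p _ => ?_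
    have h1 := abs_rfun_le hH.eigenvectorBasis hH'.eigenvectorBasis f p.1 p.2
    calc |hH.eigenvalues p.1 - hH'.eigenvalues p.2| *
          |rfun hH.eigenvectorBasis hH'.eigenvectorBasis f p.1 p.2|
        ≤ |hH.eigenvalues p.1 - hH'.eigenvalues p.2| *
            ((‖(inner ℂ (hH.eigenvectorBasis p.1) f : ℂ)‖ *
              ‖(inner ℂ (hH'.eigenvectorBasis p.2) f : ℂ)‖) *
              ‖(inner ℂ (hH.eigenvectorBasis p.1) (hH'.eigenvectorBasis p.2) : ℂ)‖) :=
          mul_le_mul_of_nonneg_left h1 (abs_nonneg _)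
      _ = _ := by ring
  have hA : ∑ p : Fin n × Fin n,
      (‖(inner ℂ (hH.eigenvectorBasis p.1) f : ℂ)‖ * ‖(inner ℂ (hH'.eigenvectorBasis p.2) f : ℂ)‖) ^ 2
      = 1 := by
    rw [Fintype.sum_prod_type]
    have hrow : ∀ i : Fin n, ∑ j : Fin n,
        (‖(inner ℂ (hH.eigenvectorBasis i) f : ℂ)‖ * ‖(inner ℂ (hH'.eigenvectorBasis j) f : ℂ)‖) ^ 2
        = ‖(inner ℂ (hH.eigenvectorBasis i) f : ℂ)‖ ^ 2 *
            ∑ j : Fin n, ‖(inner ℂ (hH'.eigenvectorBasis j) f : ℂ)‖ ^ 2 := by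
      intro i
      rw [Finset.mul_sum]
      exact Finset.sum_congr rfl fun j _ => by ring
    rw [Finset.sum_congr rfl fun i _ => hrow i, ← Finset.sum_mul,
      parseval hH.eigenvectorBasis f, parseval hH'.eigenvectorBasis f, hf]
    norm_num
  have hB : ∑ p : Fin n × Fin n,
      (|hH.eigenvalues p.1 - hH'.eigenvalues p.2| *
        ‖(inner ℂ (hH.eigenvectorBasis p.1) (hH'.eigenvectorBasis p.2) : ℂ)‖) ^ 2
      ≤ n * matOpNorm (H - H') ^ 2 := by
    rw [Fintype.sum_prod_type_right]
    calc ∑ j : Fin n, ∑ i : Fin n,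
          (|hH.eigenvalues i - hH'.eigenvalues j| *
            ‖(inner ℂ (hH.eigenvectorBasis i) (hH'.eigenvectorBasis j) : ℂ)‖) ^ 2
        ≤ ∑ _j : Fin n, matOpNorm (H - H') ^ 2 :=
          Finset.sum_le_sum fun j _ => row_bound H H' hH hH' j
      _ = n * matOpNorm (H - H') ^ 2 := by
          rw [Finset.sum_const, Finset.card_univ, Fintype.card_fin, nsmul_eq_mul]
  have hS : (∑ p : Fin n × Fin n,
      (‖(inner ℂ (hH.eigenvectorBasis p.1) f : ℂ)‖ * ‖(inner ℂ (hH'.eigenvectorBasis p.2) f : ℂ)‖)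
      * (|hH.eigenvalues p.1 - hH'.eigenvalues p.2| *
          ‖(inner ℂ (hH.eigenvectorBasis p.1) (hH'.eigenvectorBasis p.2) : ℂ)‖)) ^ 2
      ≤ n * matOpNorm (H - H') ^ 2 := by
    have hcs := Finset.sum_mul_sq_le_sq_mul_sq Finset.univ
      (fun p : Fin n × Fin n =>
        ‖(inner ℂ (hH.eigenvectorBasis p.1) f : ℂ)‖ * ‖(inner ℂ (hH'.eigenvectorBasis p.2) f : ℂ)‖)
      (fun p : Fin n × Fin n => |hH.eigenvalues p.1 - hH'.eigenvalues p.2| *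
        ‖(inner ℂ (hH.eigenvectorBasis p.1) (hH'.eigenvectorBasis p.2) : ℂ)‖)
    rw [hA, one_mul] at hcs
    exact hcs.trans hB
  have hSnn : 0 ≤ ∑ p : Fin n × Fin n,
      (‖(inner ℂ (hH.eigenvectorBasis p.1) f : ℂ)‖ * ‖(inner ℂ (hH'.eigenvectorBasis p.2) f : ℂ)‖)
      * (|hH.eigenvalues p.1 - hH'.eigenvalues p.2| *
          ‖(inner ℂ (hH.eigenvectorBasis p.1) (hH'.eigenvectorBasis p.2) : ℂ)‖) :=
    Finset.sum_nonneg fun p _ => mul_nonneg (mul_nonneg (norm_nonneg _) (norm_nonneg _))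
      (mul_nonneg (abs_nonneg _) (norm_nonneg _))
  have hopnn : 0 ≤ matOpNorm (H - H') := norm_nonneg _
  have hn1 : (1:ℝ) ≤ n := by exact_mod_cast hn
  have hsq : (∑ p : Fin n × Fin n,
      (‖(inner ℂ (hH.eigenvectorBasis p.1) f : ℂ)‖ * ‖(inner ℂ (hH'.eigenvectorBasis p.2) f : ℂ)‖)
      * (|hH.eigenvalues p.1 - hH'.eigenvalues p.2| *
          ‖(inner ℂ (hH.eigenvectorBasis p.1) (hH'.eigenvectorBasis p.2) : ℂ)‖)) ^ 2
      ≤ (n * matOpNorm (H - H')) ^ 2 := by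
    have h2 : (n : ℝ) * matOpNorm (H - H') ^ 2 ≤ (n * matOpNorm (H - H')) ^ 2 := by
      nlinarith [sq_nonneg (matOpNorm (H - H'))]
    exact hS.trans h2
  have hfinal := le_of_pow_le_pow_left₀ (two_ne_zero) (mul_nonneg (le_trans zero_le_one hn1) hopnn) hsq
  exact (step1.trans step2).trans hfinal
end

section
/- Let H be an n × n real symmetric matrix. For x, y ∈ {1, …, n} define f_{x,y} = (δ_x + δ_y)/√2 when x ≠ y and f_{x,x} = δ_x. If σ is a permutation of {1, …, n} such that μ_{f_{x,y}}^H = μ_{f_{σ(x),σ(y)}}^H for all pairs (x, y), then σ is an automorphism of H, i.e., Φ_σ^T H Φ_σ = H. -/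
open MeasureTheory

/-- A real symmetric matrix is Hermitian. -/
theorem Matrix.IsSymm.isHermitianReal {n : ℕ} {H : Matrix (Fin n) (Fin n) ℝ}
    (hH : H.IsSymm) : H.IsHermitian := hH

/-- The vector `f_{x,y}`: equal to `(δ_x + δ_y)/√2` for `x ≠ y`, and to `δ_x` for `x = y`. -/
noncomputable def pairIndicator {n : ℕ} (x y : Fin n) : EuclideanSpace ℝ (Fin n) :=
  if x = y then EuclideanSpace.single x 1
  else (Real.sqrt 2)⁻¹ • (EuclideanSpace.single x 1 + EuclideanSpace.single y 1)

/-- First moment of the power spectrum measure. -/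
lemma powerSpectrum_moment {n : ℕ} (H : Matrix (Fin n) (Fin n) ℝ) (hH : H.IsHermitian)
    (f : EuclideanSpace ℝ (Fin n)) :
    ∫ t, t ∂(powerSpectrum H hH f) =
      ∑ i, ‖(inner ℝ (hH.eigenvectorBasis i) f : ℝ)‖ ^ 2 * hH.eigenvalues i := by
  rw [powerSpectrum, integral_finset_sum_measure ?_]
  · refine Finset.sum_congr rfl fun i _ => ?_
    rw [integral_smul_measure, integral_dirac, ENNReal.toReal_ofReal (by positivity), smul_eq_mul]
  · intro i _
    refine Integrable.smul_measure ⟨measurable_id.aestronglyMeasurable, ?_⟩ ENNReal.ofReal_ne_top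
    simp [HasFiniteIntegral, lintegral_dirac]

open Matrix in
/-- The first moment equals the quadratic form `⟨f, H f⟩`. -/
lemma powerSpectrum_qform {n : ℕ} (H : Matrix (Fin n) (Fin n) ℝ) (hH : H.IsHermitian)
    (f : EuclideanSpace ℝ (Fin n)) :
    ∑ i, ‖(inner ℝ (hH.eigenvectorBasis i) f : ℝ)‖ ^ 2 * hH.eigenvalues i
      = dotProduct f (H.mulVec f) := by
  have hinner : ∀ g : EuclideanSpace ℝ (Fin n), ∀ i,
      (inner ℝ (hH.eigenvectorBasis i) g : ℝ) = dotProduct (⇑(hH.eigenvectorBasis i)) g := by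
    intro g i
    simp [PiLp.inner_apply, dotProduct, mul_comm]
  have hsym : ∀ i, dotProduct (⇑(hH.eigenvectorBasis i)) (H *ᵥ f)
      = hH.eigenvalues i * dotProduct (⇑(hH.eigenvectorBasis i)) f := by
    intro i
    rw [dotProduct_mulVec, ← mulVec_transpose]
    have hT : Hᵀ = H := by
      have := hH
      rw [IsHermitian, conjTranspose] at this
      exact this
    rw [hT, hH.mulVec_eigenvectorBasis, smul_dotProduct]
    rfl
  have key := (hH.eigenvectorBasis).sum_inner_mul_inner f
    ((WithLp.equiv 2 (Fin n → ℝ)).symm (H *ᵥ f))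
  have h2 : (inner ℝ f ((WithLp.equiv 2 (Fin n → ℝ)).symm (H *ᵥ f)) : ℝ)
      = dotProduct f (H *ᵥ f) := by
    simp [PiLp.inner_apply, dotProduct, mul_comm]
  rw [h2] at key
  rw [← key]
  refine Finset.sum_congr rfl fun i _ => ?_
  have h3 : (inner ℝ (hH.eigenvectorBasis i) ((WithLp.equiv 2 (Fin n → ℝ)).symm (H *ᵥ f)) : ℝ)
      = hH.eigenvalues i * (inner ℝ (hH.eigenvectorBasis i) f : ℝ) := by
    rw [hinner, hinner]
    simpa using hsym i
  have h4 : (inner ℝ f (hH.eigenvectorBasis i) : ℝ) = inner ℝ (hH.eigenvectorBasis i) f :=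
    real_inner_comm _ _
  rw [h3, h4, Real.norm_eq_abs, sq_abs]
  ring

open Matrix in
lemma qform_pairIndicator_diag {n : ℕ} (H : Matrix (Fin n) (Fin n) ℝ) (x : Fin n) :
    dotProduct (pairIndicator x x) (H *ᵥ (pairIndicator x x)) = H x x := by
  simp [pairIndicator, dotProduct, mulVec, EuclideanSpace.single_apply, ite_mul, mul_ite,
    Finset.sum_ite_eq, Finset.sum_ite_eq']

open Matrix in
lemma qform_pairIndicator_off {n : ℕ} (H : Matrix (Fin n) (Fin n) ℝ) (x y : Fin n) (hxy : x ≠ y) :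
    dotProduct (pairIndicator x y) (H *ᵥ (pairIndicator x y))
      = 2⁻¹ * (H x x + H x y + H y x + H y y) := by
  have hf : ∀ k, (pairIndicator x y) k
      = (Real.sqrt 2)⁻¹ * ((if k = x then 1 else 0) + (if k = y then 1 else 0)) := by
    intro k
    simp only [pairIndicator, if_neg hxy, PiLp.smul_apply, PiLp.add_apply,
      EuclideanSpace.single_apply, smul_eq_mul]
  have hc : (Real.sqrt 2)⁻¹ * (Real.sqrt 2)⁻¹ = 2⁻¹ := by
    rw [← mul_inv, Real.mul_self_sqrt (by norm_num)]
  simp only [dotProduct, mulVec, hf]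
  simp [dotProduct, Finset.mul_sum, mul_add, add_mul, ite_mul, mul_ite,
    Finset.sum_add_distrib, Finset.sum_ite_eq, Finset.sum_ite_eq', hxy, Ne.symm hxy]
  rw [← hc]; ring

/-- if a permutation `σ` preserves all the power spectrum measures of the pair
indicators `f_{x,y}`, then `σ` is an automorphism of the real symmetric matrix `H`, i.e.
`Φ_σ^T H Φ_σ = H`, expressed entrywise as `H.submatrix σ σ = H`. -/
theorem perm_aut_of_powerSpectrum_eq {n : ℕ} (H : Matrix (Fin n) (Fin n) ℝ)
    (hH : H.IsSymm) (σ : Equiv.Perm (Fin n))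
    (hspec : ∀ x y : Fin n,
      powerSpectrum H hH.isHermitianReal (pairIndicator x y) =
        powerSpectrum H hH.isHermitianReal (pairIndicator (σ x) (σ y))) :
    H.submatrix σ σ = H := by
  have key : ∀ x y : Fin n,
      dotProduct (pairIndicator x y) (H.mulVec (pairIndicator x y))
      = dotProduct (pairIndicator (σ x) (σ y)) (H.mulVec (pairIndicator (σ x) (σ y))) := by
    intro x y
    have h := congrArg (fun μ : Measure ℝ => ∫ t, t ∂μ) (hspec x y)
    simp only [powerSpectrum_moment, powerSpectrum_qform] at h
    exact h
  have hdiag : ∀ x, H (σ x) (σ x) = H x x := by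
    intro x
    have h := key x x
    rw [qform_pairIndicator_diag, qform_pairIndicator_diag] at h
    exact h.symm
  ext i j
  rw [Matrix.submatrix_apply]
  by_cases hij : i = j
  · subst hij; exact hdiag i
  · have h := key i j
    rw [qform_pairIndicator_off H i j hij,
      qform_pairIndicator_off H _ _ (fun hc => hij (σ.injective hc))] at h
    have h1 := hdiag i
    have h2 := hdiag j
    have hs1 : H j i = H i j := hH.apply i j
    have hs2 : H (σ j) (σ i) = H (σ i) (σ j) := hH.apply (σ i) (σ j)
    linarith
end

section
/- Let H be an n × n Hermitian matrix, let i, j ∈ {1, …, n}, and let σ be any permutation of {1, …, n} with σ(j) = i. Then the power spectrum signatures at vertices i and j satisfy W₁(μ_{δ_i}^H, μ_{δ_j}^H) ≤ n · ‖H − Φ_σ^T H Φ_σ‖₂. Consequently W₁(μ_{δ_i}^H, μ_{δ_j}^H) ≤ n · min over permutations σ with σ(j) = i of ‖H − Φ_σ^T H Φ_σ‖₂. -/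
open MeasureTheory Matrix

lemma jump_eq (a b : ℝ) :
    (fun x => |(if a ≤ x then (1:ℝ) else 0) - (if b ≤ x then 1 else 0)|)
      = (Set.Ico (min a b) (max a b)).indicator (fun _ => (1:ℝ)) := by
  funext x
  by_cases ha : a ≤ x <;> by_cases hb : b ≤ x
  · simp [Set.indicator_apply, Set.mem_Ico, ha, hb, not_lt.2 (max_le ha hb)]
  · have hab : a < b := lt_of_le_of_lt ha (not_le.1 hb)
    rw [min_eq_left hab.le, max_eq_right hab.le]
    simp [Set.indicator_apply, Set.mem_Ico, ha, hb, not_le.1 hb]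
  · have hba : b < a := lt_of_le_of_lt hb (not_le.1 ha)
    rw [min_eq_right hba.le, max_eq_left hba.le]
    simp [Set.indicator_apply, Set.mem_Ico, ha, hb, not_le.1 ha]
  · have : x < min a b := lt_min (not_le.1 ha) (not_le.1 hb)
    simp [Set.indicator_apply, Set.mem_Ico, ha, hb, not_le.2 this]

lemma jump_integrable (a b : ℝ) :
    Integrable (fun x => |(if a ≤ x then (1:ℝ) else 0) - (if b ≤ x then 1 else 0)|) := by
  rw [jump_eq]
  exact (integrable_indicator_iff measurableSet_Ico).2
    (integrableOn_const (by rw [Real.volume_Ico]; exact ENNReal.ofReal_ne_top))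

lemma jump_integral (a b : ℝ) :
    ∫ x, |(if a ≤ x then (1:ℝ) else 0) - (if b ≤ x then 1 else 0)| = |a - b| := by
  rw [jump_eq, MeasureTheory.integral_indicator_const (1:ℝ) measurableSet_Ico,
    Real.volume_real_Ico, smul_eq_mul, mul_one,
    max_eq_left (by simp [min_le_max] : (0:ℝ) ≤ max a b - min a b),
    max_sub_min_eq_abs, abs_sub_comm]

lemma cdf_eval {n : ℕ} (w : Fin n → ℝ) (hw : ∀ k, 0 ≤ w k) (lam : Fin n → ℝ) (x : ℝ) :
    ((∑ k : Fin n, ENNReal.ofReal (w k) • Measure.dirac (lam k)) (Set.Iic x)).toReal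
      = ∑ k : Fin n, w k * (if lam k ≤ x then 1 else 0) := by
  rw [Measure.finset_sum_apply, ENNReal.toReal_sum]
  · refine Finset.sum_congr rfl fun k _ => ?_
    rw [Measure.smul_apply, smul_eq_mul, Measure.dirac_apply' _ measurableSet_Iic,
      Set.indicator_apply]
    by_cases h : lam k ≤ x <;> simp [h, Set.mem_Iic, ENNReal.toReal_ofReal (hw k)]
  · intro k _
    rw [Measure.smul_apply, smul_eq_mul, Measure.dirac_apply' _ measurableSet_Iic,
      Set.indicator_apply]
    by_cases h : lam k ≤ x <;> simp [h, Set.mem_Iic]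

lemma sum_norm_le_sqrt {n : ℕ} (φ : OrthonormalBasis (Fin n) ℂ (EuclideanSpace ℂ (Fin n)))
    (f : EuclideanSpace ℂ (Fin n)) (hf : ‖f‖ = 1) :
    ∑ k : Fin n, ‖(inner ℂ (φ k) f : ℂ)‖ ≤ Real.sqrt n := by
  have hpar : ∑ k : Fin n, ‖(inner ℂ (φ k) f : ℂ)‖ ^ 2 = 1 := by
    have h1 : ‖φ.repr f‖ ^ 2 = ∑ k : Fin n, ‖φ.repr f k‖ ^ 2 := PiLp.norm_sq_eq_of_L2 _ _
    have h2 : ∑ k : Fin n, ‖φ.repr f k‖ ^ 2 = ∑ k : Fin n, ‖(inner ℂ (φ k) f : ℂ)‖ ^ 2 :=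
      Finset.sum_congr rfl fun k _ => by rw [φ.repr_apply_apply]
    rw [← h2, ← h1, φ.repr.norm_map f, hf, one_pow]
  have h := sq_sum_le_card_mul_sum_sq (s := Finset.univ)
      (f := fun k => ‖(inner ℂ (φ k) f : ℂ)‖)
  rw [hpar, mul_one, Finset.card_univ, Fintype.card_fin] at h
  exact (Real.le_sqrt (Finset.sum_nonneg fun k _ => norm_nonneg _) (by positivity)).2 h

/-- Core perturbation lemma. -/
lemma psCore {n : ℕ} (A B : Matrix (Fin n) (Fin n) ℂ)
    (hA : A.IsHermitian)
    (φ ψ : OrthonormalBasis (Fin n) ℂ (EuclideanSpace ℂ (Fin n)))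
    (lam gam : Fin n → ℝ)
    (hAφ : ∀ k, Matrix.toEuclideanLin A (φ k) = ((lam k : ℝ) : ℂ) • φ k)
    (hBψ : ∀ l, Matrix.toEuclideanLin B (ψ l) = ((gam l : ℝ) : ℂ) • ψ l)
    (f : EuclideanSpace ℂ (Fin n)) (hf : ‖f‖ = 1) :
    W1 (∑ k : Fin n, ENNReal.ofReal (‖(inner ℂ (φ k) f : ℂ)‖ ^ 2) • Measure.dirac (lam k))
       (∑ l : Fin n, ENNReal.ofReal (‖(inner ℂ (ψ l) f : ℂ)‖ ^ 2) • Measure.dirac (gam l))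
      ≤ n * matOpNorm (A - B) := by
  classical
  set a : Fin n → ℂ := fun k => inner ℂ (φ k) f with ha_def
  set b : Fin n → ℂ := fun l => inner ℂ (ψ l) f with hb_def
  set c : Fin n → Fin n → ℂ := fun k l => inner ℂ (φ k) (ψ l) with hc_def
  set t : Fin n → Fin n → ℂ := fun k l => (starRingEnd ℂ) (a k) * c k l * b l with ht_def
  set N := matOpNorm (A - B) with hN_def
  have hN : 0 ≤ N := norm_nonneg _
  -- key operator bound
  have hkey : ∀ k l, ‖c k l‖ * |lam k - gam l| ≤ N := by
    intro k l
    have hsym : (Matrix.toEuclideanLin A).IsSymmetric :=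
      Matrix.isHermitian_iff_isSymmetric.1 hA
    have h1 : (inner ℂ (φ k) (Matrix.toEuclideanLin (A - B) (ψ l)) : ℂ)
        = ((lam k : ℂ) - gam l) * c k l := by
      rw [map_sub, LinearMap.sub_apply, inner_sub_right, hBψ l, inner_smul_right,
        ← hsym (φ k) (ψ l), hAφ k, inner_smul_left]
      rw [Complex.conj_ofReal]
      ring
    have h2 : ‖(inner ℂ (φ k) (Matrix.toEuclideanLin (A - B) (ψ l)) : ℂ)‖ ≤ N := by
      calc ‖(inner ℂ (φ k) (Matrix.toEuclideanLin (A - B) (ψ l)) : ℂ)‖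
          ≤ ‖φ k‖ * ‖Matrix.toEuclideanLin (A - B) (ψ l)‖ := norm_inner_le_norm _ _
        _ ≤ ‖φ k‖ * (N * ‖ψ l‖) := by
            gcongr
            rw [← Matrix.coe_toEuclideanCLM_eq_toEuclideanLin]
            exact (Matrix.toEuclideanCLM (𝕜 := ℂ) (A - B)).le_opNorm (ψ l)
        _ = N := by rw [φ.orthonormal.1 k, ψ.orthonormal.1 l]; ring
    calc ‖c k l‖ * |lam k - gam l|
        = ‖((lam k : ℂ) - gam l) * c k l‖ := by
          rw [norm_mul, ← Complex.ofReal_sub, Complex.norm_real, Real.norm_eq_abs]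
          ring
      _ ≤ N := h1 ▸ h2
  have hconjmul : ∀ z : ℂ, ((starRingEnd ℂ) z * z).re = ‖z‖ ^ 2 := by
    intro z
    rw [mul_comm, Complex.mul_conj, Complex.normSq_eq_norm_sq]
    norm_cast
  -- weights as sums of t
  have hwa : ∀ k, ‖a k‖ ^ 2 = ∑ l, (t k l).re := by
    intro k
    have hs : ∑ l, t k l = (starRingEnd ℂ) (a k) * a k := by
      simp_rw [ht_def, mul_assoc, ← Finset.mul_sum]
      congr 1
      simpa [hc_def, hb_def, ha_def] using ψ.sum_inner_mul_inner (φ k) f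
    rw [← Complex.re_sum, hs, hconjmul]
  have hwb : ∀ l, ‖b l‖ ^ 2 = ∑ k, (t k l).re := by
    intro l
    have hs : ∑ k, t k l = (starRingEnd ℂ) (b l) * b l := by
      simp_rw [ht_def, ← Finset.sum_mul]
      congr 1
      calc ∑ k, (starRingEnd ℂ) (a k) * c k l
          = ∑ k, (inner ℂ f (φ k) : ℂ) * inner ℂ (φ k) (ψ l) :=
            Finset.sum_congr rfl fun k _ => by rw [ha_def, hc_def, inner_conj_symm]
        _ = inner ℂ f (ψ l) := φ.sum_inner_mul_inner f (ψ l)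
        _ = (starRingEnd ℂ) (b l) := by rw [hb_def, inner_conj_symm]
    rw [← Complex.re_sum, hs, hconjmul]
  -- CDF difference identity
  set D : ℝ → ℝ := fun x =>
    ((∑ k : Fin n, ENNReal.ofReal (‖a k‖ ^ 2) • Measure.dirac (lam k)) (Set.Iic x)).toReal
      - ((∑ l : Fin n, ENNReal.ofReal (‖b l‖ ^ 2) • Measure.dirac (gam l)) (Set.Iic x)).toReal
    with hD_def
  have hD : ∀ x, D x = ∑ k, ∑ l, (t k l).re *
      ((if lam k ≤ x then (1:ℝ) else 0) - (if gam l ≤ x then 1 else 0)) := by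
    intro x
    rw [hD_def]
    simp only
    rw [cdf_eval _ (fun k => by positivity) lam x, cdf_eval _ (fun l => by positivity) gam x]
    have e1 : ∑ k, ‖a k‖ ^ 2 * (if lam k ≤ x then (1:ℝ) else 0)
        = ∑ k, ∑ l, (t k l).re * (if lam k ≤ x then (1:ℝ) else 0) := by
      refine Finset.sum_congr rfl fun k _ => ?_
      rw [hwa k, Finset.sum_mul]
    have e2 : ∑ l, ‖b l‖ ^ 2 * (if gam l ≤ x then (1:ℝ) else 0)
        = ∑ k, ∑ l, (t k l).re * (if gam l ≤ x then (1:ℝ) else 0) := by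
      rw [Finset.sum_comm]
      refine Finset.sum_congr rfl fun l _ => ?_
      rw [hwb l, Finset.sum_mul]
    rw [e1, e2, ← Finset.sum_sub_distrib]
    refine Finset.sum_congr rfl fun k _ => ?_
    rw [← Finset.sum_sub_distrib]
    refine Finset.sum_congr rfl fun l _ => ?_
    ring
  -- the dominating function
  set G : ℝ → ℝ := fun x => ∑ k, ∑ l, ‖t k l‖ *
      |(if lam k ≤ x then (1:ℝ) else 0) - (if gam l ≤ x then 1 else 0)| with hG_def
  have hDG : ∀ x, |D x| ≤ G x := by
    intro x
    rw [hD x]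
    calc |∑ k, ∑ l, (t k l).re *
        ((if lam k ≤ x then (1:ℝ) else 0) - (if gam l ≤ x then 1 else 0))|
        ≤ ∑ k, |∑ l, (t k l).re *
          ((if lam k ≤ x then (1:ℝ) else 0) - (if gam l ≤ x then 1 else 0))| :=
          Finset.abs_sum_le_sum_abs _ _
      _ ≤ G x := by
          refine Finset.sum_le_sum fun k _ => ?_
          refine le_trans (Finset.abs_sum_le_sum_abs _ _) ?_
          refine Finset.sum_le_sum fun l _ => ?_
          rw [abs_mul]
          exact mul_le_mul_of_nonneg_right (Complex.abs_re_le_norm _) (abs_nonneg _)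
  have hGint : Integrable G := by
    refine integrable_finset_sum _ fun k _ => integrable_finset_sum _ fun l _ => ?_
    exact (jump_integrable (lam k) (gam l)).const_mul _
  have hW1 : W1 (∑ k : Fin n, ENNReal.ofReal (‖a k‖ ^ 2) • Measure.dirac (lam k))
      (∑ l : Fin n, ENNReal.ofReal (‖b l‖ ^ 2) • Measure.dirac (gam l)) ≤ ∫ x, G x := by
    refine integral_mono_of_nonneg (Filter.Eventually.of_forall fun x => abs_nonneg _) hGint
      (Filter.Eventually.of_forall fun x => hDG x)
  have hGval : ∫ x, G x = ∑ k, ∑ l, ‖t k l‖ * |lam k - gam l| := by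
    rw [hG_def]
    simp only
    rw [integral_finset_sum _ fun k _ =>
      integrable_finset_sum _ fun l _ => (jump_integrable (lam k) (gam l)).const_mul _]
    refine Finset.sum_congr rfl fun k _ => ?_
    rw [integral_finset_sum _ fun l _ => (jump_integrable (lam k) (gam l)).const_mul _]
    refine Finset.sum_congr rfl fun l _ => ?_
    rw [MeasureTheory.integral_const_mul, jump_integral]
  have hfinal : ∑ k, ∑ l, ‖t k l‖ * |lam k - gam l| ≤ n * N := by
    have step1 : ∑ k, ∑ l, ‖t k l‖ * |lam k - gam l|
        ≤ ∑ k, ∑ l, ‖a k‖ * ‖b l‖ * N := by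
      refine Finset.sum_le_sum fun k _ => Finset.sum_le_sum fun l _ => ?_
      have : ‖t k l‖ * |lam k - gam l| = ‖a k‖ * ‖b l‖ * (‖c k l‖ * |lam k - gam l|) := by
        rw [ht_def]
        simp only [norm_mul, RCLike.norm_conj]
        ring
      rw [this]
      exact mul_le_mul_of_nonneg_left (hkey k l) (by positivity)
    have step2 : ∑ k, ∑ l, ‖a k‖ * ‖b l‖ * N
        = (∑ k, ‖a k‖) * (∑ l, ‖b l‖) * N := by
      rw [Finset.sum_mul_sum, Finset.sum_mul]
      refine Finset.sum_congr rfl fun k _ => ?_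
      rw [Finset.sum_mul]
    have step3 : (∑ k, ‖a k‖) * (∑ l, ‖b l‖) * N ≤ Real.sqrt n * Real.sqrt n * N := by
      have h1 := sum_norm_le_sqrt φ f hf
      have h2 := sum_norm_le_sqrt ψ f hf
      have hs1 : (0:ℝ) ≤ ∑ k, ‖a k‖ := Finset.sum_nonneg fun k _ => norm_nonneg _
      have hs2 : (0:ℝ) ≤ ∑ l, ‖b l‖ := Finset.sum_nonneg fun l _ => norm_nonneg _
      exact mul_le_mul_of_nonneg_right
        (mul_le_mul h1 h2 hs2 (Real.sqrt_nonneg _)) hN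
    have step4 : Real.sqrt n * Real.sqrt n * N = n * N := by
      rw [Real.mul_self_sqrt (Nat.cast_nonneg n)]
    linarith
  calc W1 _ _ ≤ ∫ x, G x := hW1
    _ = ∑ k, ∑ l, ‖t k l‖ * |lam k - gam l| := hGval
    _ ≤ n * N := hfinal


lemma eig_lift {n : ℕ} (A : Matrix (Fin n) (Fin n) ℂ) (v : EuclideanSpace ℂ (Fin n)) (lam : ℝ)
    (h : A *ᵥ (WithLp.equiv 2 (Fin n → ℂ) v) = lam • (WithLp.equiv 2 (Fin n → ℂ) v)) :
    Matrix.toEuclideanLin A v = (lam : ℂ) • v := by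
  apply (WithLp.equiv 2 _).injective
  change A *ᵥ (WithLp.equiv 2 (Fin n → ℂ) v) = _
  rw [h]
  funext r
  simp [Complex.real_smul]

lemma eig_perm {n : ℕ} (H : Matrix (Fin n) (Fin n) ℂ) (σ : Equiv.Perm (Fin n))
    (v : EuclideanSpace ℂ (Fin n)) (lam : ℝ)
    (h : H *ᵥ (WithLp.equiv 2 (Fin n → ℂ) v) = lam • (WithLp.equiv 2 (Fin n → ℂ) v)) :
    Matrix.toEuclideanLin (H.submatrix σ σ)
        ((LinearIsometryEquiv.piLpCongrLeft 2 ℂ ℂ σ⁻¹) v)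
      = (lam : ℂ) • ((LinearIsometryEquiv.piLpCongrLeft 2 ℂ ℂ σ⁻¹) v) := by
  apply eig_lift
  have hfun : (WithLp.equiv 2 (Fin n → ℂ)) ((LinearIsometryEquiv.piLpCongrLeft 2 ℂ ℂ σ⁻¹) v)
      = (WithLp.equiv 2 (Fin n → ℂ) v) ∘ σ := by
    funext r
    simp [LinearIsometryEquiv.piLpCongrLeft_apply, Equiv.piCongrLeft'_apply, Equiv.Perm.inv_def]
  have h2 : ((WithLp.equiv 2 (Fin n → ℂ)) v ∘ ⇑σ ∘ ⇑σ.symm) = (WithLp.equiv 2 (Fin n → ℂ)) v := by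
    funext r; simp
  rw [hfun, Matrix.submatrix_mulVec_equiv,
    show ((WithLp.equiv 2 (Fin n → ℂ)) v ∘ ⇑σ) ∘ ⇑σ.symm = (WithLp.equiv 2 (Fin n → ℂ)) v from h2,
    h]
  funext r
  simp [hfun]


/-- STATEMENT 5: for vertices `i, j` and any permutation `σ` with `σ j = i`, the power
spectrum signatures `μ_{δ_i}^H`, `μ_{δ_j}^H` satisfy
`W₁(μ_{δ_i}^H, μ_{δ_j}^H) ≤ n ‖H - Φ_σ^T H Φ_σ‖₂`; consequently the same bound holds with
the infimum over all permutations `σ` with `σ j = i`. Here `Φ_σ^T H Φ_σ = H.submatrix σ σ`. -/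
theorem wasserstein_powerSpectrum_vertices_le {n : ℕ} (H : Matrix (Fin n) (Fin n) ℂ)
    (hH : H.IsHermitian) (i j : Fin n) :
    (∀ σ : Equiv.Perm (Fin n), σ j = i →
      W1 (powerSpectrum H hH (EuclideanSpace.single i 1))
          (powerSpectrum H hH (EuclideanSpace.single j 1))
        ≤ n * matOpNorm (H - H.submatrix σ σ)) ∧
    W1 (powerSpectrum H hH (EuclideanSpace.single i 1))
        (powerSpectrum H hH (EuclideanSpace.single j 1))
      ≤ n * sInf {c : ℝ | ∃ σ : Equiv.Perm (Fin n), σ j = i ∧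
          c = matOpNorm (H - H.submatrix σ σ)} := by
  have main : ∀ σ : Equiv.Perm (Fin n), σ j = i →
      W1 (powerSpectrum H hH (EuclideanSpace.single i 1))
          (powerSpectrum H hH (EuclideanSpace.single j 1))
        ≤ n * matOpNorm (H - H.submatrix σ σ) := by
    intro σ hσ
    set V := LinearIsometryEquiv.piLpCongrLeft 2 ℂ ℂ (σ⁻¹ : Equiv.Perm (Fin n)) with hV_def
    set φ' : OrthonormalBasis (Fin n) ℂ (EuclideanSpace ℂ (Fin n)) :=
      hH.eigenvectorBasis.map V with hφ'_def
    have hφ'app : ∀ k m, (φ' k) m = hH.eigenvectorBasis k (σ m) := by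
      intro k m
      simp [hφ'_def, hV_def, OrthonormalBasis.map_apply,
        LinearIsometryEquiv.piLpCongrLeft_apply, Equiv.piCongrLeft'_apply, Equiv.Perm.inv_def]
    -- rewrite μ_i as a power spectrum for the permuted data
    have hμ : powerSpectrum H hH (EuclideanSpace.single i 1)
        = ∑ k : Fin n, ENNReal.ofReal (‖(inner ℂ (φ' k) (EuclideanSpace.single j 1) : ℂ)‖ ^ 2) •
            Measure.dirac (hH.eigenvalues k) := by
      refine Finset.sum_congr rfl fun k _ => ?_
      congr 2
      rw [show ((1:ℂ) = ((1:ℂ) : ℂ)) from rfl]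
      rw [EuclideanSpace.inner_single_right, EuclideanSpace.inner_single_right]
      simp only [hφ'app k j, hσ, _root_.map_one, one_mul, RCLike.norm_conj]
    have hAherm : (H.submatrix σ σ).IsHermitian := hH.submatrix σ
    have hAφ : ∀ k, Matrix.toEuclideanLin (H.submatrix σ σ) (φ' k)
        = ((hH.eigenvalues k : ℝ) : ℂ) • φ' k := by
      intro k
      have := eig_perm H σ (hH.eigenvectorBasis k) (hH.eigenvalues k)
        (hH.mulVec_eigenvectorBasis k)
      simpa [hφ'_def, hV_def, OrthonormalBasis.map_apply] using this
    have hBψ : ∀ l, Matrix.toEuclideanLin H (hH.eigenvectorBasis l)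
        = ((hH.eigenvalues l : ℝ) : ℂ) • hH.eigenvectorBasis l := fun l =>
      eig_lift _ _ _ (hH.mulVec_eigenvectorBasis l)
    have hf : ‖(EuclideanSpace.single j (1:ℂ) : EuclideanSpace ℂ (Fin n))‖ = 1 := by
      simp [EuclideanSpace.norm_single]
    have hcore := psCore (H.submatrix σ σ) H hAherm φ' hH.eigenvectorBasis
      hH.eigenvalues hH.eigenvalues hAφ hBψ (EuclideanSpace.single j 1) hf
    have hnorm : matOpNorm (H.submatrix σ σ - H) = matOpNorm (H - H.submatrix σ σ) := by
      unfold matOpNorm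
      rw [← neg_sub, map_neg, norm_neg]
    rw [hμ]
    unfold powerSpectrum
    rw [← hnorm]
    exact hcore
  refine ⟨main, ?_⟩
  have hn : 0 < n := i.pos
  set S := {c : ℝ | ∃ σ : Equiv.Perm (Fin n), σ j = i ∧
      c = matOpNorm (H - H.submatrix σ σ)} with hS_def
  have hne : S.Nonempty := ⟨matOpNorm (H - H.submatrix (Equiv.swap i j) (Equiv.swap i j)),
    Equiv.swap i j, Equiv.swap_apply_right i j, rfl⟩
  set w := W1 (powerSpectrum H hH (EuclideanSpace.single i 1))
      (powerSpectrum H hH (EuclideanSpace.single j 1)) with hw_def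
  have hle : w / n ≤ sInf S := by
    refine le_csInf hne ?_
    rintro c ⟨σ, hσ, rfl⟩
    rw [div_le_iff₀ (by positivity : (0:ℝ) < (n:ℝ))]
    calc w ≤ n * matOpNorm (H - H.submatrix σ σ) := main σ hσ
      _ = matOpNorm (H - H.submatrix σ σ) * n := by ring
  calc w = (n : ℝ) * (w / n) := by field_simp
    _ ≤ n * sInf S := by
        exact mul_le_mul_of_nonneg_left hle (by positivity)
end

section
/- Let g : ℝ → ℝ be a Lipschitz function with Lipschitz constant K, let f ∈ ℂ^n be a unit vector, and let H, H' be n × n Hermitian matrices. Then the expectations of g under the two power spectrum measures satisfy |∫ g dμ_f^H − ∫ g dμ_f^{H'}| ≤ K · n · ‖H − H'‖₂. -/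
open MeasureTheory

lemma integral_powerSpectrum {n : ℕ} (H : Matrix (Fin n) (Fin n) ℂ) (hH : H.IsHermitian)
    (f : EuclideanSpace ℂ (Fin n)) {g : ℝ → ℝ} (hgc : Continuous g) :
    ∫ s, g s ∂ powerSpectrum H hH f
      = ∑ i : Fin n, ‖(inner ℂ (hH.eigenvectorBasis i) f : ℂ)‖ ^ 2 * g (hH.eigenvalues i) := by
  rw [powerSpectrum, integral_finset_sum_measure (fun i _ => ?_)]
  · refine Finset.sum_congr rfl fun i _ => ?_
    rw [integral_smul_measure, integral_dirac, ENNReal.toReal_ofReal (by positivity), smul_eq_mul]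
  · refine ⟨hgc.aestronglyMeasurable, ?_⟩
    rw [HasFiniteIntegral, lintegral_smul_measure, lintegral_dirac]
    exact ENNReal.mul_lt_top ENNReal.ofReal_lt_top (by simp)

lemma clm_eigen {n : ℕ} (H : Matrix (Fin n) (Fin n) ℂ) (hH : H.IsHermitian) (i : Fin n) :
    Matrix.toEuclideanCLM (𝕜 := ℂ) H (hH.eigenvectorBasis i)
      = (hH.eigenvalues i : ℝ) • hH.eigenvectorBasis i := by
  apply (WithLp.equiv 2 (Fin n → ℂ)).injective
  rw [WithLp.equiv_apply, Matrix.ofLp_toEuclideanCLM]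
  simpa [Matrix.toLin'_apply] using hH.mulVec_eigenvectorBasis i

lemma selfadj {n : ℕ} (H' : Matrix (Fin n) (Fin n) ℂ) (hH' : H'.IsHermitian) :
    IsSelfAdjoint (Matrix.toEuclideanCLM (𝕜 := ℂ) H') := by
  rw [IsSelfAdjoint, ← map_star]
  congr 1

set_option maxHeartbeats 2000000 in
/-- STATEMENT 7: for a `K`-Lipschitz function `g : ℝ → ℝ`, a unit vector `f ∈ ℂ^n` and
Hermitian matrices `H, H'`, the expectations of `g` under the two power spectrum measures
satisfy `|∫ g dμ_f^H - ∫ g dμ_f^{H'}| ≤ K n ‖H - H'‖₂`. -/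
theorem powerSpectrum_expectation_lipschitz_stability {n : ℕ} (g : ℝ → ℝ) (K : ℝ)
    (hg : ∀ s t : ℝ, |g s - g t| ≤ K * |s - t|)
    (f : EuclideanSpace ℂ (Fin n)) (hf : ‖f‖ = 1)
    (H H' : Matrix (Fin n) (Fin n) ℂ) (hH : H.IsHermitian) (hH' : H'.IsHermitian) :
    |(∫ s, g s ∂ powerSpectrum H hH f) - (∫ s, g s ∂ powerSpectrum H' hH' f)|
      ≤ K * n * matOpNorm (H - H') := by
  classical
  have hK0 : 0 ≤ K := by
    have h := hg 0 1
    simp only [sub_zero, abs_one, mul_one, zero_sub, abs_neg] at h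
    exact le_trans (abs_nonneg _) h
  have hgc : Continuous g := by
    refine (LipschitzWith.of_dist_le_mul (K := K.toNNReal) (f := g) fun s t => ?_).continuous
    rw [Real.dist_eq, Real.dist_eq, Real.coe_toNNReal K hK0]
    exact hg s t
  set φ : Fin n → EuclideanSpace ℂ (Fin n) := fun i => hH.eigenvectorBasis i with hφ
  set ψ : Fin n → EuclideanSpace ℂ (Fin n) := fun j => hH'.eigenvectorBasis j with hψ
  set lam : Fin n → ℝ := fun i => hH.eigenvalues i with hlam
  set mu : Fin n → ℝ := fun j => hH'.eigenvalues j with hmu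
  set a : Fin n → ℂ := fun i => inner ℂ (φ i) f with ha
  set b : Fin n → ℂ := fun j => inner ℂ (ψ j) f with hb
  set M : ℝ := matOpNorm (H - H') with hM
  have hM0 : 0 ≤ M := norm_nonneg _
  set A : EuclideanSpace ℂ (Fin n) →L[ℂ] EuclideanSpace ℂ (Fin n) :=
    Matrix.toEuclideanCLM (𝕜 := ℂ) (H - H') with hAdef
  have hnormφ : ∀ i, ‖φ i‖ = 1 := fun i => hH.eigenvectorBasis.orthonormal.1 i
  have hnormψ : ∀ j, ‖ψ j‖ = 1 := fun j => hH'.eigenvectorBasis.orthonormal.1 j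
  -- key bound
  have key : ∀ i j, |lam i - mu j| * ‖(inner ℂ (ψ j) (φ i) : ℂ)‖ ≤ M := by
    intro i j
    have h3 : ((lam i - mu j : ℝ) : ℂ) * (inner ℂ (ψ j) (φ i) : ℂ) = inner ℂ (ψ j) (A (φ i)) := by
      rw [hAdef, map_sub]
      rw [ContinuousLinearMap.sub_apply, inner_sub_right]
      have h1 : (inner ℂ (ψ j) (Matrix.toEuclideanCLM (𝕜 := ℂ) H (φ i)) : ℂ)
          = (lam i : ℂ) * inner ℂ (ψ j) (φ i) := by
        rw [show Matrix.toEuclideanCLM (𝕜 := ℂ) H (φ i) = (lam i : ℝ) • φ i from clm_eigen H hH i,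
          RCLike.real_smul_eq_coe_smul (K := ℂ), inner_smul_right]
        rfl
      have h2 : (inner ℂ (ψ j) (Matrix.toEuclideanCLM (𝕜 := ℂ) H' (φ i)) : ℂ)
          = (mu j : ℂ) * inner ℂ (ψ j) (φ i) := by
        rw [← ContinuousLinearMap.adjoint_inner_left, ← ContinuousLinearMap.star_eq_adjoint,
          (selfadj H' hH').star_eq,
          show Matrix.toEuclideanCLM (𝕜 := ℂ) H' (ψ j) = (mu j : ℝ) • ψ j from clm_eigen H' hH' j,
          RCLike.real_smul_eq_coe_smul (K := ℂ), inner_smul_left, RCLike.conj_ofReal]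
        rfl
      rw [h1, h2]
      push_cast
      ring
    calc |lam i - mu j| * ‖(inner ℂ (ψ j) (φ i) : ℂ)‖
        = ‖((lam i - mu j : ℝ) : ℂ) * (inner ℂ (ψ j) (φ i) : ℂ)‖ := by
          rw [norm_mul, Complex.norm_real, Real.norm_eq_abs]
      _ = ‖(inner ℂ (ψ j) (A (φ i)) : ℂ)‖ := by rw [h3]
      _ ≤ ‖ψ j‖ * ‖A (φ i)‖ := norm_inner_le_norm _ _
      _ ≤ 1 * (‖A‖ * ‖φ i‖) := by
          rw [hnormψ j]
          exact mul_le_mul_of_nonneg_left (A.le_opNorm _) zero_le_one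
      _ = M := by rw [hnormφ i, one_mul, mul_one, hM, hAdef]; rfl
  -- integral representations
  have e1 : ∫ s, g s ∂ powerSpectrum H hH f
      = (∑ i, ∑ j, (g (lam i) : ℂ)
          * (((starRingEnd ℂ) (b j) * (inner ℂ (ψ j) (φ i) : ℂ)) * a i)).re := by
    rw [integral_powerSpectrum H hH f hgc, Complex.re_sum]
    refine Finset.sum_congr rfl fun i _ => ?_
    have hexp : (starRingEnd ℂ) (a i)
        = ∑ j, (starRingEnd ℂ) (b j) * (inner ℂ (ψ j) (φ i) : ℂ) := by
      have h0 : (starRingEnd ℂ) (a i) = (inner ℂ f (φ i) : ℂ) := by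
        rw [ha]; exact inner_conj_symm f (φ i)
      rw [h0, ← OrthonormalBasis.sum_inner_mul_inner hH'.eigenvectorBasis f (φ i)]
      refine Finset.sum_congr rfl fun j _ => ?_
      congr 1
      exact (inner_conj_symm f (ψ j)).symm
    have : ∑ j, (g (lam i) : ℂ) * (((starRingEnd ℂ) (b j) * (inner ℂ (ψ j) (φ i) : ℂ)) * a i)
        = (g (lam i) : ℂ) * ((starRingEnd ℂ) (a i) * a i) := by
      calc ∑ j, (g (lam i) : ℂ) * (((starRingEnd ℂ) (b j) * (inner ℂ (ψ j) (φ i) : ℂ)) * a i)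
          = (∑ j, (starRingEnd ℂ) (b j) * (inner ℂ (ψ j) (φ i) : ℂ))
              * ((g (lam i) : ℂ) * a i) := by
            rw [Finset.sum_mul]
            exact Finset.sum_congr rfl fun j _ => by ring
        _ = (starRingEnd ℂ) (a i) * ((g (lam i) : ℂ) * a i) := by rw [← hexp]
        _ = (g (lam i) : ℂ) * ((starRingEnd ℂ) (a i) * a i) := by ring
    rw [this, mul_comm ((starRingEnd ℂ) (a i)) (a i), Complex.mul_conj, ← Complex.ofReal_mul,
      Complex.ofReal_re, Complex.normSq_eq_norm_sq]
    ring
  have e2 : ∫ s, g s ∂ powerSpectrum H' hH' f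
      = (∑ i, ∑ j, (g (mu j) : ℂ)
          * (((starRingEnd ℂ) (b j) * (inner ℂ (ψ j) (φ i) : ℂ)) * a i)).re := by
    rw [integral_powerSpectrum H' hH' f hgc, Finset.sum_comm, Complex.re_sum]
    refine Finset.sum_congr rfl fun j _ => ?_
    have hexp : b j = ∑ i, (inner ℂ (ψ j) (φ i) : ℂ) * a i :=
      (OrthonormalBasis.sum_inner_mul_inner hH.eigenvectorBasis (ψ j) f).symm
    have : ∑ i, (g (mu j) : ℂ) * (((starRingEnd ℂ) (b j) * (inner ℂ (ψ j) (φ i) : ℂ)) * a i)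
        = (g (mu j) : ℂ) * ((starRingEnd ℂ) (b j) * b j) := by
      calc ∑ i, (g (mu j) : ℂ) * (((starRingEnd ℂ) (b j) * (inner ℂ (ψ j) (φ i) : ℂ)) * a i)
          = (∑ i, (inner ℂ (ψ j) (φ i) : ℂ) * a i)
              * ((g (mu j) : ℂ) * (starRingEnd ℂ) (b j)) := by
            rw [Finset.sum_mul]
            exact Finset.sum_congr rfl fun i _ => by ring
        _ = b j * ((g (mu j) : ℂ) * (starRingEnd ℂ) (b j)) := by rw [← hexp]
        _ = (g (mu j) : ℂ) * ((starRingEnd ℂ) (b j) * b j) := by ring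
    rw [this, mul_comm ((starRingEnd ℂ) (b j)) (b j), Complex.mul_conj, ← Complex.ofReal_mul,
      Complex.ofReal_re, Complex.normSq_eq_norm_sq]
    ring
  -- the difference as one complex sum
  have ediff : (∫ s, g s ∂ powerSpectrum H hH f) - (∫ s, g s ∂ powerSpectrum H' hH' f)
      = (∑ i, ∑ j, ((g (lam i) : ℂ) - (g (mu j) : ℂ))
          * (((starRingEnd ℂ) (b j) * (inner ℂ (ψ j) (φ i) : ℂ)) * a i)).re := by
    rw [e1, e2, ← Complex.sub_re]
    congr 1
    rw [← Finset.sum_sub_distrib]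
    refine Finset.sum_congr rfl fun i _ => ?_
    rw [← Finset.sum_sub_distrib]
    exact Finset.sum_congr rfl fun j _ => by ring
  -- Cauchy-Schwarz sums
  have hbφ : ∑ i, ‖a i‖ ≤ Real.sqrt n := by
    have hb1 : ∑ i : Fin n, ‖a i‖ ^ 2 ≤ 1 := by
      have := hH.eigenvectorBasis.orthonormal.sum_inner_products_le f (s := Finset.univ)
      simpa [hf, ha] using this
    have hcs := Finset.sum_mul_sq_le_sq_mul_sq Finset.univ (fun i : Fin n => ‖a i‖) (fun _ => 1)
    simp only [mul_one, one_pow, Finset.sum_const, Finset.card_univ, Fintype.card_fin,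
      nsmul_eq_mul] at hcs
    have hsq : (∑ i, ‖a i‖) ^ 2 ≤ (n : ℝ) := by
      calc (∑ i, ‖a i‖) ^ 2 ≤ (∑ i, ‖a i‖ ^ 2) * n := hcs
        _ ≤ 1 * n := by
            exact mul_le_mul_of_nonneg_right hb1 (Nat.cast_nonneg n)
        _ = n := one_mul _
    have h0 : 0 ≤ ∑ i, ‖a i‖ := Finset.sum_nonneg fun i _ => norm_nonneg _
    nlinarith [Real.sq_sqrt (Nat.cast_nonneg n : (0:ℝ) ≤ n), Real.sqrt_nonneg (n : ℝ),
      sq_nonneg (∑ i, ‖a i‖ - Real.sqrt n)]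
  have hbψ : ∑ j, ‖b j‖ ≤ Real.sqrt n := by
    have hb1 : ∑ j : Fin n, ‖b j‖ ^ 2 ≤ 1 := by
      have := hH'.eigenvectorBasis.orthonormal.sum_inner_products_le f (s := Finset.univ)
      simpa [hf, hb] using this
    have hcs := Finset.sum_mul_sq_le_sq_mul_sq Finset.univ (fun j : Fin n => ‖b j‖) (fun _ => 1)
    simp only [mul_one, one_pow, Finset.sum_const, Finset.card_univ, Fintype.card_fin,
      nsmul_eq_mul] at hcs
    have hsq : (∑ j, ‖b j‖) ^ 2 ≤ (n : ℝ) := by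
      calc (∑ j, ‖b j‖) ^ 2 ≤ (∑ j, ‖b j‖ ^ 2) * n := hcs
        _ ≤ 1 * n := mul_le_mul_of_nonneg_right hb1 (Nat.cast_nonneg n)
        _ = n := one_mul _
    have h0 : 0 ≤ ∑ j, ‖b j‖ := Finset.sum_nonneg fun j _ => norm_nonneg _
    nlinarith [Real.sq_sqrt (Nat.cast_nonneg n : (0:ℝ) ≤ n), Real.sqrt_nonneg (n : ℝ),
      sq_nonneg (∑ j, ‖b j‖ - Real.sqrt n)]
  -- final estimate
  rw [ediff]
  calc |(∑ i, ∑ j, ((g (lam i) : ℂ) - (g (mu j) : ℂ))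
          * (((starRingEnd ℂ) (b j) * (inner ℂ (ψ j) (φ i) : ℂ)) * a i)).re|
      ≤ ‖∑ i, ∑ j, ((g (lam i) : ℂ) - (g (mu j) : ℂ))
          * (((starRingEnd ℂ) (b j) * (inner ℂ (ψ j) (φ i) : ℂ)) * a i)‖ := by
        exact Complex.abs_re_le_norm _
    _ ≤ ∑ i, ∑ j, ‖((g (lam i) : ℂ) - (g (mu j) : ℂ))
          * (((starRingEnd ℂ) (b j) * (inner ℂ (ψ j) (φ i) : ℂ)) * a i)‖ := by
        refine (norm_sum_le _ _).trans (Finset.sum_le_sum fun i _ => norm_sum_le _ _)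
    _ ≤ ∑ i, ∑ j, (K * M) * (‖a i‖ * ‖b j‖) := by
        refine Finset.sum_le_sum fun i _ => Finset.sum_le_sum fun j _ => ?_
        have hterm : ‖((g (lam i) : ℂ) - (g (mu j) : ℂ))
              * (((starRingEnd ℂ) (b j) * (inner ℂ (ψ j) (φ i) : ℂ)) * a i)‖
            = |g (lam i) - g (mu j)| * (‖b j‖ * ‖(inner ℂ (ψ j) (φ i) : ℂ)‖ * ‖a i‖) := by
          rw [norm_mul, norm_mul, norm_mul, RCLike.norm_conj, ← Complex.ofReal_sub,
            Complex.norm_real, Real.norm_eq_abs]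
        rw [hterm]
        have h1 := hg (lam i) (mu j)
        have h2 := key i j
        calc |g (lam i) - g (mu j)| * (‖b j‖ * ‖(inner ℂ (ψ j) (φ i) : ℂ)‖ * ‖a i‖)
            ≤ (K * |lam i - mu j|) * (‖b j‖ * ‖(inner ℂ (ψ j) (φ i) : ℂ)‖ * ‖a i‖) :=
              mul_le_mul_of_nonneg_right h1 (by positivity)
          _ = (|lam i - mu j| * ‖(inner ℂ (ψ j) (φ i) : ℂ)‖) * (K * (‖b j‖ * ‖a i‖)) := by ring
          _ ≤ M * (K * (‖b j‖ * ‖a i‖)) :=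
              mul_le_mul_of_nonneg_right h2 (by positivity)
          _ = (K * M) * (‖a i‖ * ‖b j‖) := by ring
    _ = (K * M) * ((∑ i, ‖a i‖) * (∑ j, ‖b j‖)) := by
        rw [Finset.sum_mul_sum]
        simp only [Finset.mul_sum]
    _ ≤ (K * M) * (Real.sqrt n * Real.sqrt n) := by
        refine mul_le_mul_of_nonneg_left ?_ (mul_nonneg hK0 hM0)
        exact mul_le_mul hbφ hbψ (Finset.sum_nonneg fun j _ => norm_nonneg _)
          (Real.sqrt_nonneg _)
    _ = K * n * M := by
        rw [Real.mul_self_sqrt (Nat.cast_nonneg n)]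
        ring
end

section
/- Let X be a Banach space over ℝ or ℂ, let (Y, d) be a metric space, let f : X → Y, and let K ≥ 0. Suppose that for every x ∈ X there exist r(x) > 0 and C(x) ≥ 0 such that for all x' with ‖x − x'‖ < r(x), d(f(x), f(x')) ≤ K‖x − x'‖ + C(x)‖x − x'‖². Then f is globally K-Lipschitz: d(f(x), f(x')) ≤ K‖x − x'‖ for all x, x' ∈ X. -/
/-- STATEMENT 13: local-to-global Lipschitz bound. Let `X` be a Banach space (over ℝ or ℂ,
here over a nontrivially normed complete field whose scalars include ℝ or ℂ via `RCLike`),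
`Y` a metric space, and `f : X → Y`. If for every `x` there are `r(x) > 0` and `C(x) ≥ 0`
such that `d(f x, f x') ≤ K ‖x - x'‖ + C(x) ‖x - x'‖²` whenever `‖x - x'‖ < r(x)`, then `f`
is globally `K`-Lipschitz. -/
theorem lipschitz_of_local_almost_lipschitz {𝕜 : Type*} [RCLike 𝕜]
    {X : Type*} [NormedAddCommGroup X] [NormedSpace 𝕜 X] [CompleteSpace X]
    {Y : Type*} [MetricSpace Y] (f : X → Y) (K : ℝ) (hK : 0 ≤ K)
    (hloc : ∀ x : X, ∃ r > (0 : ℝ), ∃ C ≥ (0 : ℝ), ∀ x' : X, ‖x - x'‖ < r →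
      dist (f x) (f x') ≤ K * ‖x - x'‖ + C * ‖x - x'‖ ^ 2) :
    ∀ x x' : X, dist (f x) (f x') ≤ K * ‖x - x'‖ := by
  intro x x'
  rcases eq_or_ne x x' with rfl | hne
  · simp
  have hL : 0 < ‖x - x'‖ := by rwa [norm_pos_iff, sub_ne_zero]
  set L := ‖x - x'‖ with hLdef
  refine le_of_forall_pos_le_add ?_
  intro ε hε
  set ε' := ε / L with hε'def
  have hε' : 0 < ε' := div_pos hε hL
  set v := x' - x with hv
  set γ : ℝ → X := fun t => x + ((t : ℝ) : 𝕜) • v with hγ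
  have hγ0 : γ 0 = x := by simp [hγ]
  have hγ1 : γ 1 = x' := by simp [hγ, hv]
  have hγdist : ∀ s t : ℝ, ‖γ s - γ t‖ = |s - t| * L := by
    intro s t
    have h1 : γ s - γ t = (((s - t : ℝ)) : 𝕜) • v := by
      simp only [hγ]
      rw [RCLike.ofReal_sub, sub_smul]
      abel
    have h2 : ‖v‖ = L := by rw [hv, hLdef, norm_sub_rev]
    rw [h1, norm_smul, RCLike.norm_ofReal, h2]
  set S : Set ℝ := {t | t ∈ Set.Icc (0:ℝ) 1 ∧
      dist (f x) (f (γ t)) ≤ (K + ε') * t * L} with hS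
  have h0S : (0:ℝ) ∈ S := by
    constructor
    · exact ⟨le_refl 0, zero_le_one⟩
    · simp [hγ0]
  have hSne : S.Nonempty := ⟨0, h0S⟩
  have hSbdd : BddAbove S := ⟨1, fun t ht => ht.1.2⟩
  set T := sSup S with hT
  have hT0 : 0 ≤ T := le_csSup hSbdd h0S
  have hT1 : T ≤ 1 := csSup_le hSne fun t ht => ht.1.2
  obtain ⟨r, hr, C, hC, hb⟩ := hloc (γ T)
  set δ := min (r / (2 * L)) (ε' / (C * L + 1)) with hδdef
  have hCL : 0 < C * L + 1 := by positivity
  have hδ : 0 < δ := lt_min (by positivity) (by positivity)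
  have hδr : δ * L < r := by
    calc δ * L ≤ (r / (2 * L)) * L := by
          exact mul_le_mul_of_nonneg_right (min_le_left _ _) hL.le
    _ = r / 2 := by field_simp
    _ < r := by linarith
  have hδε : C * (δ * L) ≤ ε' := by
    have h1 : δ ≤ ε' / (C * L + 1) := min_le_right _ _
    have h2 : C * L * δ ≤ (C * L + 1) * (ε' / (C * L + 1)) := by
      refine mul_le_mul (by linarith) h1 hδ.le (by positivity)
    rw [mul_div_cancel₀ _ hCL.ne'] at h2
    linarith
  -- T ∈ S
  have hTS : T ∈ S := by
    refine ⟨⟨hT0, hT1⟩, ?_⟩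
    obtain ⟨t, htS, htlt⟩ := exists_lt_of_lt_csSup hSne (show T - δ < T by linarith)
    have htT : t ≤ T := le_csSup hSbdd htS
    have hnear : ‖γ T - γ t‖ < r := by
      rw [hγdist]
      have : |T - t| ≤ δ := by rw [abs_of_nonneg (by linarith)]; linarith
      calc |T - t| * L ≤ δ * L := mul_le_mul_of_nonneg_right this hL.le
      _ < r := hδr
    have hd := hb (γ t) hnear
    rw [hγdist] at hd
    have habs : |T - t| = T - t := abs_of_nonneg (by linarith)
    rw [habs] at hd
    have htri := dist_triangle (f x) (f (γ t)) (f (γ T))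
    rw [dist_comm (f (γ t)) (f (γ T))] at htri
    have hS2 := htS.2
    have hkey : C * ((T - t) * L) ≤ ε' := by
      have h1 : (T - t) * L ≤ δ * L := mul_le_mul_of_nonneg_right (by linarith) hL.le
      calc C * ((T - t) * L) ≤ C * (δ * L) := mul_le_mul_of_nonneg_left h1 hC
      _ ≤ ε' := hδε
    nlinarith [mul_nonneg (sub_nonneg.2 htT) hL.le]
  -- T = 1
  have hT1' : T = 1 := by
    by_contra hTne
    have hTlt : T < 1 := lt_of_le_of_ne hT1 hTne
    set δ' := min (1 - T) δ with hδ'def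
    have hδ'pos : 0 < δ' := lt_min (by linarith) hδ
    have hδ'δ : δ' ≤ δ := min_le_right _ _
    have ht1 : T + δ' ≤ 1 := by
      have := min_le_left (1 - T) δ
      simp only [hδ'def] at *
      linarith [min_le_left (1 - T) δ]
    have hnear : ‖γ T - γ (T + δ')‖ < r := by
      rw [hγdist]
      have : |T - (T + δ')| = δ' := by rw [abs_sub_comm]; simp [abs_of_nonneg hδ'pos.le]
      rw [this]
      calc δ' * L ≤ δ * L := mul_le_mul_of_nonneg_right hδ'δ hL.le
      _ < r := hδr
    have hd := hb (γ (T + δ')) hnear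
    rw [hγdist] at hd
    have habs : |T - (T + δ')| = δ' := by rw [abs_sub_comm]; simp [abs_of_nonneg hδ'pos.le]
    rw [habs] at hd
    have hmem : T + δ' ∈ S := by
      refine ⟨⟨by linarith, ht1⟩, ?_⟩
      have htri := dist_triangle (f x) (f (γ T)) (f (γ (T + δ')))
      have hS2 := hTS.2
      have hkey : C * (δ' * L) ≤ ε' := by
        have h1 : δ' * L ≤ δ * L := mul_le_mul_of_nonneg_right hδ'δ hL.le
        calc C * (δ' * L) ≤ C * (δ * L) := mul_le_mul_of_nonneg_left h1 hC
        _ ≤ ε' := hδε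
      nlinarith [mul_nonneg hδ'pos.le hL.le]
    have := le_csSup hSbdd hmem
    linarith
  have hfinal := hTS.2
  rw [hT1', hγ1] at hfinal
  have : ε' * L = ε := by rw [hε'def]; field_simp
  calc dist (f x) (f x') ≤ (K + ε') * 1 * L := hfinal
  _ = K * L + ε' * L := by ring
  _ = K * L + ε := by rw [this]
end

section
/- Let P_1, …, P_m be n × n complex orthogonal projection matrices that are pairwise orthogonal (P_h P_j = 0 for h ≠ j) and complete (Σ_{h=1}^m P_h = I). Then for every n × n complex matrix Δ and every f ∈ ℂ^n with ‖f‖₂ = 1, Σ_{h ≠ j} |⟨P_h f, Δ (P_j f)⟩| ≤ (m − 1) · ‖Δ‖₂, where the sum is over ordered pairs (h, j) with h ≠ j. -/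
lemma matOpNorm_mulVec_le {n : ℕ} (M : Matrix (Fin n) (Fin n) ℂ)
    (x : EuclideanSpace ℂ (Fin n)) :
    ‖(WithLp.toLp 2 (M.mulVec x) : EuclideanSpace ℂ (Fin n))‖ ≤ matOpNorm M * ‖x‖ := by
  have h : (WithLp.toLp 2 (M.mulVec x) : EuclideanSpace ℂ (Fin n))
      = Matrix.toEuclideanCLM (𝕜 := ℂ) M x := rfl
  rw [h]
  exact (Matrix.toEuclideanCLM (𝕜 := ℂ) M).le_opNorm x

lemma offdiag_sum_le {m : ℕ} (a : Fin m → ℝ) (ha : ∀ h, 0 ≤ a h)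
    (hsq : ∑ h : Fin m, a h ^ 2 = 1) :
    ∑ h : Fin m, ∑ j ∈ Finset.univ.filter (fun j : Fin m => j ≠ h), a h * a j
      ≤ (m : ℝ) - 1 := by
  classical
  have expand : ∀ h : Fin m, ∑ j ∈ Finset.univ.filter (fun j : Fin m => j ≠ h),
      a h * a j = (∑ j : Fin m, a h * a j) - a h ^ 2 := by
    intro h
    have hsplit := Finset.sum_filter_add_sum_filter_not Finset.univ
      (fun j : Fin m => j = h) (fun j => a h * a j)
    have heq : Finset.univ.filter (fun j : Fin m => j = h) = {h} := by
      ext j; simp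
    rw [heq, Finset.sum_singleton] at hsplit
    have : (Finset.univ.filter (fun j : Fin m => j ≠ h))
        = Finset.univ.filter (fun j : Fin m => ¬ j = h) := rfl
    rw [this]
    nlinarith [hsplit]
  calc ∑ h : Fin m, ∑ j ∈ Finset.univ.filter (fun j : Fin m => j ≠ h), a h * a j
      = (∑ h : Fin m, ∑ j : Fin m, a h * a j) - ∑ h : Fin m, a h ^ 2 := by
        rw [← Finset.sum_sub_distrib]
        exact Finset.sum_congr rfl (fun h _ => expand h)
    _ = (∑ h : Fin m, a h) ^ 2 - 1 := by
        rw [hsq, sq, Finset.sum_mul_sum]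
    _ ≤ (m : ℝ) - 1 := by
        have h2 := sq_sum_le_card_mul_sum_sq (s := (Finset.univ : Finset (Fin m))) (f := a)
        rw [hsq] at h2
        simp at h2
        linarith
  
/-- STATEMENT 16: for a complete family of pairwise-orthogonal orthogonal projections
`P_1, …, P_m` (so `P_h² = P_h`, `P_h* = P_h`, `P_h P_j = 0` for `h ≠ j`, `Σ P_h = I`),
any matrix `Δ` and any unit vector `f ∈ ℂ^n`,
`Σ_{h ≠ j} |⟨P_h f, Δ (P_j f)⟩| ≤ (m - 1) ‖Δ‖₂`. -/
theorem offdiag_projection_inner_bound {n m : ℕ}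
    (P : Fin m → Matrix (Fin n) (Fin n) ℂ)
    (hidem : ∀ h, P h * P h = P h)
    (hherm : ∀ h, (P h).IsHermitian)
    (horth : ∀ h j, h ≠ j → P h * P j = 0)
    (hcomplete : ∑ h : Fin m, P h = 1)
    (Δ : Matrix (Fin n) (Fin n) ℂ)
    (f : EuclideanSpace ℂ (Fin n)) (hf : ‖f‖ = 1) :
    ∑ h : Fin m, ∑ j ∈ Finset.univ.filter (fun j : Fin m => j ≠ h),
        ‖(inner (𝕜 := ℂ) (E := EuclideanSpace ℂ (Fin n)) (WithLp.toLp 2 ((P h).mulVec f))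
            (WithLp.toLp 2 (Δ.mulVec ((P j).mulVec f))) : ℂ)‖
      ≤ ((m : ℝ) - 1) * matOpNorm Δ := by
  classical
  set a : Fin m → ℝ := fun h => ‖(WithLp.toLp 2 ((P h).mulVec f) : EuclideanSpace ℂ (Fin n))‖ with ha
  have ha_nonneg : ∀ h, 0 ≤ a h := fun h => norm_nonneg _
  have hT : ∀ (M : Matrix (Fin n) (Fin n) ℂ) (x : EuclideanSpace ℂ (Fin n)),
      Matrix.toEuclideanCLM (𝕜 := ℂ) M x
        = (WithLp.toLp 2 (M.mulVec x) : EuclideanSpace ℂ (Fin n)) := fun _ _ => rfl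
  have key : ∀ h j : Fin m,
      ‖(inner (𝕜 := ℂ) (E := EuclideanSpace ℂ (Fin n)) (WithLp.toLp 2 ((P h).mulVec f))
          (WithLp.toLp 2 (Δ.mulVec ((P j).mulVec f))) : ℂ)‖
        ≤ matOpNorm Δ * (a h * a j) := by
    intro h j
    calc ‖(inner (𝕜 := ℂ) (E := EuclideanSpace ℂ (Fin n)) (WithLp.toLp 2 ((P h).mulVec f))
          (WithLp.toLp 2 (Δ.mulVec ((P j).mulVec f))) : ℂ)‖
        ≤ ‖(WithLp.toLp 2 ((P h).mulVec f) : EuclideanSpace ℂ (Fin n))‖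
            * ‖(WithLp.toLp 2 (Δ.mulVec ((P j).mulVec f)) : EuclideanSpace ℂ (Fin n))‖ :=
          norm_inner_le_norm _ _
      _ ≤ a h * (matOpNorm Δ * a j) := by
          apply mul_le_mul_of_nonneg_left _ (ha_nonneg h)
          exact matOpNorm_mulVec_le Δ (WithLp.toLp 2 ((P j).mulVec f))
      _ = matOpNorm Δ * (a h * a j) := by ring
  have hsq : ∑ h : Fin m, a h ^ 2 = 1 := by
    have step : ∀ h : Fin m, (a h : ℝ) ^ 2
        = RCLike.re (inner (𝕜 := ℂ) (E := EuclideanSpace ℂ (Fin n)) f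
            (Matrix.toEuclideanCLM (𝕜 := ℂ) (P h) f)) := by
      intro h
      have hadj : ContinuousLinearMap.adjoint (Matrix.toEuclideanCLM (𝕜 := ℂ) (P h))
          = Matrix.toEuclideanCLM (𝕜 := ℂ) (P h) := by
        rw [← ContinuousLinearMap.star_eq_adjoint, ← map_star]
        congr 1
        exact (hherm h)
      have h1 : (inner (𝕜 := ℂ) (E := EuclideanSpace ℂ (Fin n))
            (Matrix.toEuclideanCLM (𝕜 := ℂ) (P h) f)
            (Matrix.toEuclideanCLM (𝕜 := ℂ) (P h) f) : ℂ)
          = inner (𝕜 := ℂ) (E := EuclideanSpace ℂ (Fin n)) f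
              (Matrix.toEuclideanCLM (𝕜 := ℂ) (P h) f) := by
        rw [← ContinuousLinearMap.adjoint_inner_right, hadj]
        rw [show Matrix.toEuclideanCLM (𝕜 := ℂ) (P h)
              (Matrix.toEuclideanCLM (𝕜 := ℂ) (P h) f)
            = (Matrix.toEuclideanCLM (𝕜 := ℂ) (P h)
              * Matrix.toEuclideanCLM (𝕜 := ℂ) (P h)) f from rfl]
        rw [← map_mul, hidem h]
      have h2 : (a h : ℝ) ^ 2
          = RCLike.re (inner (𝕜 := ℂ) (E := EuclideanSpace ℂ (Fin n))
              (Matrix.toEuclideanCLM (𝕜 := ℂ) (P h) f)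
              (Matrix.toEuclideanCLM (𝕜 := ℂ) (P h) f) : ℂ) := by
        rw [← inner_self_eq_norm_sq (𝕜 := ℂ)]
        rfl
      rw [h2, h1]
    rw [Finset.sum_congr rfl (fun h _ => step h), ← map_sum, ← inner_sum,
      ← ContinuousLinearMap.sum_apply, ← map_sum, hcomplete, map_one,
      ContinuousLinearMap.one_apply, inner_self_eq_norm_sq (𝕜 := ℂ), hf]
    norm_num
  calc ∑ h : Fin m, ∑ j ∈ Finset.univ.filter (fun j : Fin m => j ≠ h),
        ‖(inner (𝕜 := ℂ) (E := EuclideanSpace ℂ (Fin n)) (WithLp.toLp 2 ((P h).mulVec f))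
            (WithLp.toLp 2 (Δ.mulVec ((P j).mulVec f))) : ℂ)‖
      ≤ ∑ h : Fin m, ∑ j ∈ Finset.univ.filter (fun j : Fin m => j ≠ h),
        matOpNorm Δ * (a h * a j) := by
        apply Finset.sum_le_sum; intro h _; apply Finset.sum_le_sum; intro j _; exact key h j
    _ = matOpNorm Δ * ∑ h : Fin m, ∑ j ∈ Finset.univ.filter (fun j : Fin m => j ≠ h),
        a h * a j := by rw [Finset.mul_sum]; congr 1; ext h; rw [Finset.mul_sum]
    _ ≤ matOpNorm Δ * ((m : ℝ) - 1) :=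
        mul_le_mul_of_nonneg_left (offdiag_sum_le a ha_nonneg hsq) (norm_nonneg _)
    _ = ((m : ℝ) - 1) * matOpNorm Δ := mul_comm _ _
end
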